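/- For a nontrivial real Banach space X: the dual X* has the weak* local diameter 2 property if and only if X is locally octahedral. -/

import Mathlib

open Metric Set

noncomputable section

/-- A slice of the closed unit ball determined by `f ∈ S_{X*}` and `α > 0` is
`{x ∈ B_X : f x > 1 - α}`.  `X` has the local diameter 2 property if every slice
of `B_X` has diameter 2. -/
def LocalDiameterTwoProp (X : Type*) [NormedAddCommGroup X] [NormedSpace ℝ X] : Prop :=
  ∀ f : X →L[ℝ] ℝ, ‖f‖ = 1 → ∀ α : ℝ, 0 < α →
    Metric.diam {x : X | ‖x‖ ≤ 1 ∧ 1 - α < f x} = 2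

/-- `X` has the diameter 2 property if every nonempty relatively weakly open
subset of `B_X` has diameter 2. -/
def DiameterTwoProp (X : Type*) [NormedAddCommGroup X] [NormedSpace ℝ X] : Prop :=
  ∀ U : Set (WeakSpace ℝ X), IsOpen U →
    {x : X | ‖x‖ ≤ 1 ∧ toWeakSpace ℝ X x ∈ U}.Nonempty →
    Metric.diam {x : X | ‖x‖ ≤ 1 ∧ toWeakSpace ℝ X x ∈ U} = 2

/-- `X` has the strong diameter 2 property if every convex combination of slices
of `B_X` has diameter 2. -/
def StrongDiameterTwoProp (X : Type*) [NormedAddCommGroup X] [NormedSpace ℝ X] : Prop :=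
  ∀ (n : ℕ) (lam : Fin n → ℝ) (f : Fin n → X →L[ℝ] ℝ) (α : Fin n → ℝ),
    (∀ i, 0 ≤ lam i) → (∑ i, lam i) = 1 → (∀ i, ‖f i‖ = 1) → (∀ i, 0 < α i) →
    Metric.diam {x : X | ∃ g : Fin n → X,
      (∀ i, ‖g i‖ ≤ 1 ∧ 1 - α i < f i (g i)) ∧ x = ∑ i, lam i • g i} = 2

/-- The dual of `X` has the weak* local diameter 2 property if every weak* slice
`{f ∈ B_{X*} : f x > 1 - α}` (with `x ∈ S_X`, `α > 0`) has diameter 2. -/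
def WStarLocalDiameterTwoProp (X : Type*) [NormedAddCommGroup X] [NormedSpace ℝ X] : Prop :=
  ∀ x : X, ‖x‖ = 1 → ∀ α : ℝ, 0 < α →
    Metric.diam {f : X →L[ℝ] ℝ | ‖f‖ ≤ 1 ∧ 1 - α < f x} = 2

/-- The dual of `X` has the weak* diameter 2 property if every nonempty relatively
weak* open subset of `B_{X*}` has diameter 2. -/
def WStarDiameterTwoProp (X : Type*) [NormedAddCommGroup X] [NormedSpace ℝ X] : Prop :=
  ∀ U : Set (WeakDual ℝ X), IsOpen U →
    {f : X →L[ℝ] ℝ | ‖f‖ ≤ 1 ∧ StrongDual.toWeakDual f ∈ U}.Nonempty →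
    Metric.diam {f : X →L[ℝ] ℝ | ‖f‖ ≤ 1 ∧ StrongDual.toWeakDual f ∈ U} = 2

/-- The dual of `X` has the weak* strong diameter 2 property if every convex
combination of weak* slices of `B_{X*}` has diameter 2. -/
def WStarStrongDiameterTwoProp (X : Type*) [NormedAddCommGroup X] [NormedSpace ℝ X] : Prop :=
  ∀ (n : ℕ) (lam : Fin n → ℝ) (x : Fin n → X) (α : Fin n → ℝ),
    (∀ i, 0 ≤ lam i) → (∑ i, lam i) = 1 → (∀ i, ‖x i‖ = 1) → (∀ i, 0 < α i) →
    Metric.diam {f : X →L[ℝ] ℝ | ∃ g : Fin n → (X →L[ℝ] ℝ),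
      (∀ i, ‖g i‖ ≤ 1 ∧ 1 - α i < g i (x i)) ∧ f = ∑ i, lam i • g i} = 2

/-- `X` is locally octahedral. -/
def LocallyOctahedral (X : Type*) [NormedAddCommGroup X] [NormedSpace ℝ X] : Prop :=
  ∀ x : X, ∀ ε : ℝ, 0 < ε → ∃ y : X, ‖y‖ = 1 ∧
    ∀ s : ℝ, (1 - ε) * (|s| * ‖x‖ + ‖y‖) ≤ ‖s • x + y‖

/-- `X` is weakly octahedral. -/
def WeaklyOctahedral (X : Type*) [NormedAddCommGroup X] [NormedSpace ℝ X] : Prop :=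
  ∀ E : Subspace ℝ X, FiniteDimensional ℝ E → ∀ f : X →L[ℝ] ℝ, ‖f‖ ≤ 1 →
    ∀ ε : ℝ, 0 < ε → ∃ y : X, ‖y‖ = 1 ∧
      ∀ x ∈ E, (1 - ε) * (|f x| + ‖y‖) ≤ ‖x + y‖

/-- The norm on `X` is octahedral. -/
def Octahedral (X : Type*) [NormedAddCommGroup X] [NormedSpace ℝ X] : Prop :=
  ∀ E : Subspace ℝ X, FiniteDimensional ℝ E → ∀ ε : ℝ, 0 < ε →
    ∃ y : X, ‖y‖ = 1 ∧ ∀ x ∈ E, (1 - ε) * (‖x‖ + ‖y‖) ≤ ‖x + y‖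

/-
A weak* slice of `B_{X*}` at `x` of diameter almost 2 contains functionals `f`, `g` that are
almost opposite at some unit vector `y`, while both are almost `1` at `x`: then `f` norms
`s • x + y` up to `ε` for `s ≥ 0` and `-g` does so for `s ≤ 0`, which is local octahedrality.
Conversely, if `y` is almost octahedral for `x`, functionals norming `x + y` and `x - y` lie in
the slice at `x` and are almost opposite at `y`.
-/

lemma Metric.exists_lt_dist_of_lt_diam {α : Type*} [PseudoMetricSpace α] {s : Set α} {r : ℝ}
    (hr : 0 ≤ r) (h : r < diam s) : ∃ a ∈ s, ∃ b ∈ s, r < dist a b := by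
  by_contra! hle
  exact h.not_ge (diam_le_of_forall_dist_le hr hle)

section

variable {X : Type*} [NormedAddCommGroup X] [NormedSpace ℝ X]

def weakStarSlice (x : X) (α : ℝ) : Set (X →L[ℝ] ℝ) :=
  {f | ‖f‖ ≤ 1 ∧ 1 - α < f x}

lemma weakStarSlice_subset_closedBall (x : X) (α : ℝ) : weakStarSlice x α ⊆ closedBall 0 1 :=
  fun _ hf => mem_closedBall_zero_iff.2 hf.1

lemma isBounded_weakStarSlice (x : X) (α : ℝ) : Bornology.IsBounded (weakStarSlice x α) :=
  isBounded_closedBall.subset (weakStarSlice_subset_closedBall x α)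

lemma diam_weakStarSlice_le_two (x : X) (α : ℝ) : diam (weakStarSlice x α) ≤ 2 := by
  simpa using (diam_mono (weakStarSlice_subset_closedBall x α) isBounded_closedBall).trans
    (diam_closedBall zero_le_one)

lemma apply_le_norm_of_norm_le_one {f : X →L[ℝ] ℝ} (hf : ‖f‖ ≤ 1) (z : X) : f z ≤ ‖z‖ :=
  (le_abs_self _).trans (by simpa using f.le_of_opNorm_le hf z)

lemma apply_le_norm_of_norm_eq_one (f : X →L[ℝ] ℝ) {y : X} (hy : ‖y‖ = 1) : f y ≤ ‖f‖ :=
  (le_abs_self _).trans (by simpa [hy] using f.le_opNorm y)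

lemma exists_norm_eq_one_lt_apply {φ : X →L[ℝ] ℝ} {c : ℝ} (hc : 0 ≤ c) (hlt : c < ‖φ‖) :
    ∃ y : X, ‖y‖ = 1 ∧ c < φ y := by
  by_contra! hle
  refine hlt.not_ge (φ.opNorm_le_of_unit_norm hc fun z hz => abs_le.2 ⟨?_, hle z hz⟩)
  have := hle (-z) (by rwa [norm_neg])
  rw [map_neg] at this
  linarith

lemma mul_add_one_le_norm_smul_add {f : X →L[ℝ] ℝ} (hf : ‖f‖ ≤ 1) {u y : X} {ε t : ℝ}
    (hfu : 1 - ε < f u) (hfy : 1 - ε < f y) (ht : 0 ≤ t) :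
    (1 - ε) * (t + 1) ≤ ‖t • u + y‖ :=
  calc (1 - ε) * (t + 1) = t * (1 - ε) + (1 - ε) := by ring
    _ ≤ t * f u + f y := by gcongr
    _ = f (t • u + y) := by simp
    _ ≤ ‖t • u + y‖ := apply_le_norm_of_norm_le_one hf _

lemma mul_abs_add_one_le_norm_smul_add {f g : X →L[ℝ] ℝ} (hf : ‖f‖ ≤ 1) (hg : ‖g‖ ≤ 1)
    {u y : X} {ε : ℝ} (hfu : 1 - ε < f u) (hgu : 1 - ε < g u) (hfy : 1 - ε < f y)
    (hgy : 1 - ε < -g y) (t : ℝ) :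
    (1 - ε) * (|t| + 1) ≤ ‖t • u + y‖ := by
  rcases le_or_gt 0 t with ht | ht
  · rw [abs_of_nonneg ht]
    exact mul_add_one_le_norm_smul_add hf hfu hfy ht
  · have hsmul : t • u = |t| • -u := by rw [abs_of_neg ht, smul_neg, neg_smul, neg_neg]
    rw [hsmul]
    exact mul_add_one_le_norm_smul_add (f := -g) (by rwa [norm_neg]) (by simpa using hgu)
      (by simpa using hgy) (abs_nonneg t)

lemma exists_norm_eq_one_smul_eq [Nontrivial X] (x : X) : ∃ u : X, ‖u‖ = 1 ∧ ‖x‖ • u = x := by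
  by_cases hx : x = 0
  · obtain ⟨u, hu⟩ := exists_norm_eq X zero_le_one
    exact ⟨u, hu, by simp [hx]⟩
  · exact ⟨‖x‖⁻¹ • x, norm_smul_inv_norm hx, smul_inv_smul₀ (norm_ne_zero_iff.2 hx) x⟩

lemma sub_one_le_apply_left {f : X →L[ℝ] ℝ} (hf : ‖f‖ ≤ 1) {u v : X} (hv : ‖v‖ ≤ 1) {c : ℝ}
    (h : c ≤ f (u + v)) : c - 1 ≤ f u := by
  have := apply_le_norm_of_norm_le_one hf v
  rw [map_add] at h
  linarith

lemma sub_one_le_apply_right {f : X →L[ℝ] ℝ} (hf : ‖f‖ ≤ 1) {u v : X} (hu : ‖u‖ ≤ 1) {c : ℝ}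
    (h : c ≤ f (u + v)) : c - 1 ≤ f v :=
  sub_one_le_apply_left hf hu (by rwa [add_comm])

lemma LocallyOctahedral.of_wStarLocalDiameterTwoProp [Nontrivial X]
    (h : WStarLocalDiameterTwoProp X) : LocallyOctahedral X := by
  intro x ε hε
  obtain ⟨δ, hδ, hδ1, hδε⟩ : ∃ δ, 0 < δ ∧ δ ≤ 1 ∧ δ ≤ ε :=
    ⟨min ε 1, lt_min hε one_pos, min_le_right ε 1, min_le_left ε 1⟩
  obtain ⟨u, hu, hxu⟩ := exists_norm_eq_one_smul_eq x
  have hdiam : diam (weakStarSlice u δ) = 2 := h u hu δ hδ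
  obtain ⟨f, ⟨hf, hfu⟩, g, ⟨hg, hgu⟩, hfg⟩ :=
    exists_lt_dist_of_lt_diam (by linarith) (hdiam ▸ sub_lt_self 2 hδ)
  rw [dist_eq_norm] at hfg
  obtain ⟨y, hy, hfgy⟩ := exists_norm_eq_one_lt_apply (by linarith) hfg
  have hfy := apply_le_norm_of_norm_le_one hf y
  have hgy := apply_le_norm_of_norm_le_one hg (-y)
  rw [map_neg, norm_neg, hy] at hgy
  rw [hy] at hfy
  rw [sub_apply] at hfgy
  refine ⟨y, hy, fun s => ?_⟩
  have key := mul_abs_add_one_le_norm_smul_add hf hg hfu hgu (y := y) (by linarith)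
    (by linarith) (s * ‖x‖)
  rw [← smul_smul, hxu, abs_mul, abs_norm] at key
  rw [hy]
  calc (1 - ε) * (|s| * ‖x‖ + 1) ≤ (1 - δ) * (|s| * ‖x‖ + 1) := by gcongr
    _ ≤ ‖s • x + y‖ := key

lemma WStarLocalDiameterTwoProp.of_locallyOctahedral (h : LocallyOctahedral X) :
    WStarLocalDiameterTwoProp X := by
  intro x hx α hα
  refine le_antisymm (diam_weakStarSlice_le_two x α) (le_of_forall_pos_le_add fun ε hε => ?_)
  obtain ⟨δ, hδ, hδε, hδα⟩ : ∃ δ, 0 < δ ∧ 4 * δ ≤ ε ∧ 4 * δ ≤ α :=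
    ⟨min ε α / 4, by positivity, by linarith [min_le_left ε α], by linarith [min_le_right ε α]⟩
  obtain ⟨y, hy, hoct⟩ := h x δ hδ
  have hadd : (1 - δ) * 2 ≤ ‖x + y‖ := by simpa [hx, hy, one_add_one_eq_two] using hoct 1
  have hsub : (1 - δ) * 2 ≤ ‖x + -y‖ := by
    have := hoct (-1)
    rwa [abs_neg, abs_one, one_mul, hx, hy, neg_one_smul, one_add_one_eq_two, ← norm_neg,
      neg_add, neg_neg] at this
  obtain ⟨f, hf, hfxy⟩ := exists_dual_vector'' ℝ (x + y)
  obtain ⟨g, hg, hgxy⟩ := exists_dual_vector'' ℝ (x + -y)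
  simp only [RCLike.ofReal_real_eq_id, id] at hfxy hgxy
  have hfx := sub_one_le_apply_left hf hy.le (hadd.trans hfxy.ge)
  have hfy := sub_one_le_apply_right hf hx.le (hadd.trans hfxy.ge)
  have hgx := sub_one_le_apply_left hg (norm_neg y ▸ hy.le) (hsub.trans hgxy.ge)
  have hgy := sub_one_le_apply_right hg hx.le (hsub.trans hgxy.ge)
  have hfS : f ∈ weakStarSlice x α := ⟨hf, by linarith⟩
  have hgS : g ∈ weakStarSlice x α := ⟨hg, by linarith⟩
  have hfgy := apply_le_norm_of_norm_eq_one (f - g) hy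
  rw [sub_apply] at hfgy
  rw [map_neg] at hgy
  calc 2 ≤ ‖f - g‖ + ε := by linarith
    _ = dist f g + ε := by rw [dist_eq_norm]
    _ ≤ diam (weakStarSlice x α) + ε := by
        gcongr
        exact dist_le_diam_of_mem (isBounded_weakStarSlice x α) hfS hgS

end

theorem stmt_5_general (X : Type*) [NormedAddCommGroup X] [NormedSpace ℝ X] [Nontrivial X] :
    WStarLocalDiameterTwoProp X ↔ LocallyOctahedral X :=
  ⟨LocallyOctahedral.of_wStarLocalDiameterTwoProp, WStarLocalDiameterTwoProp.of_locallyOctahedral⟩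

theorem stmt_5 (X : Type*) [NormedAddCommGroup X] [NormedSpace ℝ X] [CompleteSpace X] [Nontrivial X] :
    WStarLocalDiameterTwoProp X ↔ LocallyOctahedral X :=
  stmt_5_general X
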